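/- Let 0 < 2ε ≤ d, 4ε + d ≤ η ≤ 1/4, and let Γ be a 2-colored (ε,d)-reduced graph of a 2-colored balanced bipartite graph G on parts of size n (n large), arising from the bipartite degree form of the regularity lemma with clusters U₁,…,U_k, V₁,…,V_k of common size m and exceptional sets of size at most εn. If the coloring of Γ is η-extremal, then the coloring of G is 2η-extremal. -/

import Mathlib

open SimpleGraph Set

open Function

/-- Number of edges of `K` from `A` to `B'` (as ordered pairs). -/
noncomputable def eCount {V : Type*} (K : SimpleGraph V) (A B' : Set V) : ℕ :=
  {p : V × V | p.1 ∈ A ∧ p.2 ∈ B' ∧ K.Adj p.1 p.2}.ncard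

/-!
Take for `X'` the union of the clusters in `𝒰`, for `Y₁` the union of the clusters in `𝒱₁`,
and for `Y₂` the rest of `Y`. A union of `c ≥ (1/2 - η)k` clusters has `cm ≥ (1/2 - η)(1 - ε)n`
vertices. Edges between cluster unions are counted pair by pair: at most an `η`-fraction of the
pairs are reduced edges of the colour, carrying at most `m²` edges each, and the others carry at
most `dm²` each, so there are at most `(η + d)n²` edges of that colour. Besides the clusters of
`𝒱₂`, the set `Y₂` contains only the exceptional vertices of `Y`, which add at most `εn²` blue
edges.
-/

open Finset in
theorem Finset.sum_le_card_filter_mul_add_card_mul {ι R : Type*} [Semiring R] [PartialOrder R]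
    [IsOrderedRing R] (s : Finset ι) (p : ι → Prop) [DecidablePred p] {f : ι → R} {a b : R}
    (hb : 0 ≤ b) (hpa : ∀ i ∈ s, p i → f i ≤ a) (hpb : ∀ i ∈ s, ¬p i → f i ≤ b) :
    ∑ i ∈ s, f i ≤ #{i ∈ s | p i} * a + #s * b := by
  rw [← sum_filter_add_sum_filter_not s p f]
  gcongr
  · simpa using sum_le_card_nsmul (s.filter p) f a fun i hi =>
      hpa i (mem_filter.1 hi).1 (mem_filter.1 hi).2
  · calc ∑ i ∈ s with ¬p i, f i ≤ #{i ∈ s | ¬p i} * b := by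
          simpa using sum_le_card_nsmul (s.filter (¬p ·)) f b fun i hi =>
            hpb i (mem_filter.1 hi).1 (mem_filter.1 hi).2
      _ ≤ #s * b := mul_le_mul_of_nonneg_right (Nat.mono_cast (card_filter_le s _)) hb

theorem Set.ncard_biUnion_of_ncard_eq {α ι : Type*} [Finite α] {f : ι → Set α} {m : ℕ}
    (hf : Pairwise (Disjoint on f)) (hm : ∀ i, (f i).ncard = m) (s : Finset ι) :
    (⋃ i ∈ s, f i).ncard = s.card * m := by
  have h := s.finite_toSet.ncard_biUnion (fun i _ => toFinite (f i)) (hf.set_pairwise _)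
  rw [finsum_mem_coe_finset] at h
  simpa [hm] using h

theorem Set.sdiff_biUnion_subset_biUnion_union_sdiff {α ι : Type*} [Fintype ι] [DecidableEq ι]
    (Y : Set α) (f : ι → Set α) {s t : Finset ι} (hst : s ∪ t = Finset.univ) :
    Y \ ⋃ i ∈ s, f i ⊆ (⋃ i ∈ t, f i) ∪ (Y \ ⋃ i, f i) := by
  rintro y ⟨hy, hys⟩
  by_cases hyf : y ∈ ⋃ i, f i
  · obtain ⟨i, hi⟩ := mem_iUnion.1 hyf
    have : i ∈ s ∪ t := hst ▸ Finset.mem_univ i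
    rcases Finset.mem_union.1 this with his | hit
    · exact absurd (mem_biUnion his hi) hys
    · exact Or.inl (mem_biUnion hit hi)
  · exact Or.inr ⟨hy, hyf⟩

theorem Set.biUnion_subset_sdiff_biUnion {α ι : Type*} {Y : Set α} {f : ι → Set α}
    (hfY : ∀ i, f i ⊆ Y) (hf : Pairwise (Disjoint on f)) {s t : Finset ι} (hst : Disjoint s t) :
    ⋃ i ∈ t, f i ⊆ Y \ ⋃ i ∈ s, f i := by
  refine iUnion₂_subset fun j hj => subset_sdiff.2 ⟨hfY j, ?_⟩
  simp only [disjoint_iUnion_right]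
  exact fun i hi => hf fun hji => Finset.disjoint_left.1 hst hi (hji ▸ hj)

section eCount
variable {V : Type*} (K : SimpleGraph V)

theorem eCount_mono {A A' B B' : Set V} [Finite V] (hA : A ⊆ A') (hB : B ⊆ B') :
    eCount K A B ≤ eCount K A' B' :=
  ncard_le_ncard fun _ hp => ⟨hA hp.1, hB hp.2.1, hp.2.2⟩

theorem eCount_le_ncard_mul_ncard [Finite V] (A B : Set V) : eCount K A B ≤ A.ncard * B.ncard :=
  ncard_prod (s := A) (t := B) ▸ ncard_le_ncard fun _ hp => ⟨hp.1, hp.2.1⟩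

@[simp] theorem eCount_empty_left (B : Set V) : eCount K ∅ B = 0 := by simp [eCount]

@[simp] theorem eCount_empty_right (A : Set V) : eCount K A ∅ = 0 := by simp [eCount]

theorem eCount_union_left_le (A A' B : Set V) :
    eCount K (A ∪ A') B ≤ eCount K A B + eCount K A' B := by
  unfold eCount
  simp only [mem_union, or_and_right, ofPred_or]
  exact ncard_union_le _ _

theorem eCount_union_right_le (A B B' : Set V) :
    eCount K A (B ∪ B') ≤ eCount K A B + eCount K A B' := by
  unfold eCount
  simp only [mem_union, or_and_right, and_or_left, ofPred_or]
  exact ncard_union_le _ _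

theorem eCount_biUnion_le {ι : Type*} (f g : ι → Set V) (s t : Finset ι) :
    eCount K (⋃ i ∈ s, f i) (⋃ j ∈ t, g j) ≤ ∑ p ∈ s ×ˢ t, eCount K (f p.1) (g p.2) := by
  rw [Finset.sum_product]
  refine (s.apply_union_le_sum (f := (eCount K · (⋃ j ∈ t, g j))) (eCount_empty_left K _)
    (eCount_union_left_le K _ _ _)).trans ?_
  gcongr with i
  exact t.apply_union_le_sum (f := eCount K (f i)) (eCount_empty_right K _)
    (eCount_union_right_le K _ _ _)

theorem eCount_sdiff_biUnion_le {ι : Type*} [Finite V] [Fintype ι] [DecidableEq ι]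
    (A Y : Set V) (W : ι → Set V) {t₁ t₂ : Finset ι} (h : t₁ ∪ t₂ = Finset.univ) :
    eCount K A (Y \ ⋃ j ∈ t₁, W j) ≤ eCount K A (⋃ j ∈ t₂, W j) + A.ncard * (Y \ ⋃ j, W j).ncard :=
  (eCount_mono K subset_rfl (sdiff_biUnion_subset_biUnion_union_sdiff Y W h)).trans <|
    (eCount_union_right_le K _ _ _).trans <| by
      gcongr
      exact eCount_le_ncard_mul_ncard K _ _

end eCount

theorem Set.ncard_sdiff_iUnion_add_card_mul {α ι : Type*} [Finite α] [Fintype ι] {Y : Set α}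
    {f : ι → Set α} {m : ℕ} (hfY : ∀ i, f i ⊆ Y) (hf : Pairwise (Disjoint on f))
    (hm : ∀ i, (f i).ncard = m) :
    (Y \ ⋃ i, f i).ncard + Fintype.card ι * m = Y.ncard := by
  have h := ncard_biUnion_of_ncard_eq hf hm Finset.univ
  simp only [Finset.mem_univ, iUnion_true, Finset.card_univ] at h
  rw [← h, ncard_sdiff_add_ncard_of_subset (iUnion_subset hfY)]

theorem eCount_biUnion_le_of_sparse {V ι : Type*} [Finite V] (K : SimpleGraph V)
    {U W : ι → Set V} {Γ : ι → ι → Bool} {d η : ℝ} {m : ℕ}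
    (hU : ∀ i, (U i).ncard ≤ m) (hW : ∀ j, (W j).ncard ≤ m) (hd : 0 ≤ d)
    (hΓ : ∀ i j, Γ i j = false → (eCount K (U i) (W j) : ℝ) ≤ d * m ^ 2) {s t : Finset ι}
    (hst : (((s ×ˢ t).filter (fun p => Γ p.1 p.2 = true)).card : ℝ) ≤ η * s.card * t.card) :
    (eCount K (⋃ i ∈ s, U i) (⋃ j ∈ t, W j) : ℝ) ≤ (η + d) * ((s.card * m) * (t.card * m)) := by
  have hpair : ∀ i j, (eCount K (U i) (W j) : ℝ) ≤ (m : ℝ) ^ 2 := fun i j => by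
    rw [sq]
    exact_mod_cast (eCount_le_ncard_mul_ncard K _ _).trans (Nat.mul_le_mul (hU i) (hW j))
  calc (eCount K (⋃ i ∈ s, U i) (⋃ j ∈ t, W j) : ℝ)
      ≤ ∑ p ∈ s ×ˢ t, (eCount K (U p.1) (W p.2) : ℝ) := mod_cast eCount_biUnion_le K U W s t
    _ ≤ ((s ×ˢ t).filter (fun p => Γ p.1 p.2 = true)).card * (m : ℝ) ^ 2
          + (s ×ˢ t).card * (d * m ^ 2) :=
        Finset.sum_le_card_filter_mul_add_card_mul _ _ (by positivity)
          (fun p _ _ => hpair p.1 p.2) (fun p _ hp => hΓ p.1 p.2 (by simpa using hp))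
    _ ≤ η * s.card * t.card * m ^ 2 + s.card * t.card * (d * m ^ 2) := by
        rw [Finset.card_product, Nat.cast_mul]
        gcongr
    _ = (η + d) * ((s.card * m) * (t.card * m)) := by ring

theorem half_sub_two_mul_mul_le {ε η n k m c : ℝ} (hε : 0 ≤ ε) (hεη : ε ≤ η) (hη : η ≤ 1 / 2)
    (hm : 0 ≤ m) (hn : 0 ≤ n) (hexc : n - k * m ≤ ε * n) (hc : (1 / 2 - η) * k ≤ c) :
    (1 / 2 - 2 * η) * n ≤ c * m :=
  calc (1 / 2 - 2 * η) * n ≤ (1 / 2 - η) * ((1 - ε) * n) := by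
        nlinarith [mul_nonneg hε hn, mul_nonneg (mul_nonneg hε hn) (hε.trans hεη)]
    _ ≤ (1 / 2 - η) * (k * m) := mul_le_mul_of_nonneg_left (by linarith) (by linarith)
    _ = (1 / 2 - η) * k * m := by ring
    _ ≤ c * m := by gcongr

theorem reduced_extremal_implies_extremal_general (ε d η : ℝ) (n k m : ℕ)
    (hε : 0 < ε) (hεd : 2 * ε ≤ d) (hη1 : 4 * ε + d ≤ η) (hη2 : η ≤ 1 / 4)
    (R B : SimpleGraph (Fin n ⊕ Fin n))
    (U Vc : Fin k → Set (Fin n ⊕ Fin n))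
    (hU : ∀ i, U i ⊆ Set.range Sum.inl)
    (hV : ∀ i, Vc i ⊆ Set.range Sum.inr)
    (hUdisj : ∀ i j, i ≠ j → Disjoint (U i) (U j))
    (hVdisj : ∀ i j, i ≠ j → Disjoint (Vc i) (Vc j))
    (hUm : ∀ i, (U i).ncard = m) (hVm : ∀ i, (Vc i).ncard = m)
    (hexc : (n : ℝ) - k * m ≤ ε * n)
    (ΓR ΓB : Fin k → Fin k → Bool)
    (hΓR : ∀ i j, ΓR i j = false → (eCount R (U i) (Vc j) : ℝ) ≤ d * m ^ 2)
    (hΓB : ∀ i j, ΓB i j = false → (eCount B (U i) (Vc j) : ℝ) ≤ d * m ^ 2)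
    -- the coloring of the reduced graph is η-extremal:
    (hext : ∃ (𝒰 𝒱₁ 𝒱₂ : Finset (Fin k)),
      𝒱₁ ∪ 𝒱₂ = Finset.univ ∧ Disjoint 𝒱₁ 𝒱₂ ∧
      (1 / 2 - η) * k ≤ (𝒰.card : ℝ) ∧
      (1 / 2 - η) * k ≤ (𝒱₁.card : ℝ) ∧
      (1 / 2 - η) * k ≤ (𝒱₂.card : ℝ) ∧
      (((𝒰 ×ˢ 𝒱₁).filter (fun p => ΓR p.1 p.2 = true)).card : ℝ)
        ≤ η * 𝒰.card * 𝒱₁.card ∧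
      (((𝒰 ×ˢ 𝒱₂).filter (fun p => ΓB p.1 p.2 = true)).card : ℝ)
        ≤ η * 𝒰.card * 𝒱₂.card) :
    -- then the coloring of G is 2η-extremal:
    ∃ (X' Y₁ Y₂ : Set (Fin n ⊕ Fin n)),
      X' ⊆ Set.range Sum.inl ∧
      Y₁ ∪ Y₂ = Set.range Sum.inr ∧ Disjoint Y₁ Y₂ ∧
      (1 / 2 - 2 * η) * n ≤ (X'.ncard : ℝ) ∧
      (1 / 2 - 2 * η) * n ≤ (Y₁.ncard : ℝ) ∧
      (1 / 2 - 2 * η) * n ≤ (Y₂.ncard : ℝ) ∧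
      (eCount R X' Y₁ : ℝ) ≤ 2 * η * n ^ 2 ∧
      (eCount B X' Y₂ : ℝ) ≤ 2 * η * n ^ 2 := by
  obtain ⟨𝒰, 𝒱₁, 𝒱₂, hcover, h𝒱, h𝒰, h𝒱₁, h𝒱₂, hred, hblue⟩ := hext
  have hE : ((range Sum.inr \ ⋃ j, Vc j).ncard : ℝ) + k * m = n := by
    simpa [ncard_range_of_injective Sum.inr_injective] using congrArg (Nat.cast (R := ℝ))
      (ncard_sdiff_iUnion_add_card_mul hV (fun i j => hVdisj i j) hVm)
  set X' := ⋃ i ∈ 𝒰, U i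
  set Y : Set (Fin n ⊕ Fin n) := range Sum.inr
  set E := Y \ ⋃ j, Vc j
  have hUcard := ncard_biUnion_of_ncard_eq (fun i j => hUdisj i j) hUm
  have hVcard := ncard_biUnion_of_ncard_eq (fun i j => hVdisj i j) hVm
  have hsize (s : Finset (Fin k)) (hs : (1 / 2 - η) * k ≤ s.card) :
      (1 / 2 - 2 * η) * n ≤ ((s.card * m : ℕ) : ℝ) := by
    push_cast
    exact half_sub_two_mul_mul_le hε.le (by linarith) (by linarith) (by positivity)
      (by positivity) hexc hs
  have hcard_mul_le (s : Finset (Fin k)) : (s.card : ℝ) * m ≤ n :=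
    calc (s.card : ℝ) * m ≤ k * m := by gcongr; simpa using s.card_le_univ
      _ ≤ n := by linarith [E.ncard.cast_nonneg (α := ℝ)]
  have hsparse {K : SimpleGraph (Fin n ⊕ Fin n)} {Γ : Fin k → Fin k → Bool}
      (hΓ : ∀ i j, Γ i j = false → (eCount K (U i) (Vc j) : ℝ) ≤ d * m ^ 2) {t : Finset (Fin k)}
      (ht : (((𝒰 ×ˢ t).filter (fun p => Γ p.1 p.2 = true)).card : ℝ) ≤ η * 𝒰.card * t.card) :
      (eCount K X' (⋃ j ∈ t, Vc j) : ℝ) ≤ (η + d) * n ^ 2 := by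
    refine (eCount_biUnion_le_of_sparse K (fun i => (hUm i).le) (fun j => (hVm j).le)
      (by linarith) hΓ ht).trans ?_
    rw [sq]
    gcongr
    · linarith
    exacts [hcard_mul_le _, hcard_mul_le _]
  refine ⟨X', ⋃ j ∈ 𝒱₁, Vc j, Y \ ⋃ j ∈ 𝒱₁, Vc j, iUnion₂_subset fun i _ => hU i,
    union_sdiff_cancel (iUnion₂_subset fun j _ => hV j), disjoint_sdiff_right,
    hUcard 𝒰 ▸ hsize 𝒰 h𝒰, hVcard 𝒱₁ ▸ hsize 𝒱₁ h𝒱₁, ?_, (hsparse hΓR hred).trans (by nlinarith),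
    ?_⟩
  · exact (hVcard 𝒱₂ ▸ hsize 𝒱₂ h𝒱₂).trans <| Nat.mono_cast <| ncard_le_ncard <|
      biUnion_subset_sdiff_biUnion hV (fun i j => hVdisj i j) h𝒱
  · calc (eCount B X' (Y \ ⋃ j ∈ 𝒱₁, Vc j) : ℝ)
        ≤ eCount B X' (⋃ j ∈ 𝒱₂, Vc j) + X'.ncard * E.ncard :=
          mod_cast eCount_sdiff_biUnion_le B X' Y Vc hcover
      _ ≤ (η + d) * n ^ 2 + n * (ε * n) := by
          gcongr
          exacts [hsparse hΓB hblue, hUcard 𝒰 ▸ mod_cast hcard_mul_le 𝒰, by linarith]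
      _ ≤ 2 * η * n ^ 2 := by nlinarith

/-- If the coloring of the reduced graph is `η`-extremal, then the coloring of
`G` is `2η`-extremal.  The reduced graph is given by clusters
`U 0, …, U (k-1) ⊆ X` and `Vc 0, …, Vc (k-1) ⊆ Y`, pairwise disjoint, each of
size `m`, leaving exceptional sets of size at most `εn`; the reduced red (blue)
non-edges correspond to cluster pairs carrying at most `d·m²` red (blue) edges
of `G`. -/
theorem reduced_extremal_implies_extremal (ε d η : ℝ) (n k m : ℕ)
    (hε : 0 < ε) (hεd : 2 * ε ≤ d) (hη1 : 4 * ε + d ≤ η) (hη2 : η ≤ 1 / 4)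
    (hk : 0 < k)
    (G R B : SimpleGraph (Fin n ⊕ Fin n))
    (hbip : G ≤ completeBipartiteGraph (Fin n) (Fin n))
    (hcol : R ⊔ B = G)
    (U Vc : Fin k → Set (Fin n ⊕ Fin n))
    (hU : ∀ i, U i ⊆ Set.range Sum.inl)
    (hV : ∀ i, Vc i ⊆ Set.range Sum.inr)
    (hUdisj : ∀ i j, i ≠ j → Disjoint (U i) (U j))
    (hVdisj : ∀ i j, i ≠ j → Disjoint (Vc i) (Vc j))
    (hUm : ∀ i, (U i).ncard = m) (hVm : ∀ i, (Vc i).ncard = m)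
    (hexc : (n : ℝ) - k * m ≤ ε * n)
    (ΓR ΓB : Fin k → Fin k → Bool)
    (hΓR : ∀ i j, ΓR i j = false → (eCount R (U i) (Vc j) : ℝ) ≤ d * m ^ 2)
    (hΓB : ∀ i j, ΓB i j = false → (eCount B (U i) (Vc j) : ℝ) ≤ d * m ^ 2)
    -- the coloring of the reduced graph is η-extremal:
    (hext : ∃ (𝒰 𝒱₁ 𝒱₂ : Finset (Fin k)),
      𝒱₁ ∪ 𝒱₂ = Finset.univ ∧ Disjoint 𝒱₁ 𝒱₂ ∧
      (1 / 2 - η) * k ≤ (𝒰.card : ℝ) ∧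
      (1 / 2 - η) * k ≤ (𝒱₁.card : ℝ) ∧
      (1 / 2 - η) * k ≤ (𝒱₂.card : ℝ) ∧
      (((𝒰 ×ˢ 𝒱₁).filter (fun p => ΓR p.1 p.2 = true)).card : ℝ)
        ≤ η * 𝒰.card * 𝒱₁.card ∧
      (((𝒰 ×ˢ 𝒱₂).filter (fun p => ΓB p.1 p.2 = true)).card : ℝ)
        ≤ η * 𝒰.card * 𝒱₂.card) :
    -- then the coloring of G is 2η-extremal:
    ∃ (X' Y₁ Y₂ : Set (Fin n ⊕ Fin n)),
      X' ⊆ Set.range Sum.inl ∧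
      Y₁ ∪ Y₂ = Set.range Sum.inr ∧ Disjoint Y₁ Y₂ ∧
      (1 / 2 - 2 * η) * n ≤ (X'.ncard : ℝ) ∧
      (1 / 2 - 2 * η) * n ≤ (Y₁.ncard : ℝ) ∧
      (1 / 2 - 2 * η) * n ≤ (Y₂.ncard : ℝ) ∧
      (eCount R X' Y₁ : ℝ) ≤ 2 * η * n ^ 2 ∧
      (eCount B X' Y₂ : ℝ) ≤ 2 * η * n ^ 2 :=
  reduced_extremal_implies_extremal_general ε d η n k m hε hεd hη1 hη2 R B U Vc hU hV hUdisj hVdisj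
    hUm hVm hexc ΓR ΓB hΓR hΓB hext
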